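/- arXiv:2311.03087 — 2 statements merged into one kernel-verified Lean document; each statement's English description precedes it below -/
import Mathlib

section
/- Let x_1, …, x_n (n ≥ 2) be pairwise distinct points in ℝ^{d'} and let, for each d ≥ d', ι_d : ℝ^{d'} → ℝ^d be an isometric embedding. For each d, let ε_{1,d}, …, ε_{n,d} be jointly independent random vectors each distributed as N(0, σ²I_d) with σ > 0, and set Δ_{i,j,d} = ‖ι_d(x_i) + ε_{i,d} − (ι_d(x_j) + ε_{j,d})‖. Then for every ε > 0, all four of the following probabilities tend to 1 as d → ∞: P(min_{i≠j} Δ_{i,j,d}/√d > √2·σ − ε), P(min_{i≠j} Δ_{i,j,d}/√d < √2·σ + ε), P(max_{i≠j} Δ_{i,j,d}/√d > √2·σ − ε), and P(max_{i≠j} Δ_{i,j,d}/√d < √2·σ + ε). -/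
/-!
For a fixed pair `i ≠ j`, write `Δ_{ij} = ‖u + w‖` with signal `u = ι(x_i) - ι(x_j)`, of constant
norm `‖x_i - x_j‖` once `d ≥ d'`, and noise `w = ε_i - ε_j`, whose coordinates are independent
`N(0, 2σ²)`. By Chebyshev's inequality `‖w‖² / d = (1/d) ∑_k w_k²` concentrates at `2σ²`, so
`‖w‖ / √d` concentrates at `√2 σ`, while the signal contributes at most `‖x_i - x_j‖ / √d → 0`.
A union bound over the finitely many pairs puts all normalised distances, hence their minimum and
maximum, within `c` of `√2 σ` with probability tending to one.
-/
open MeasureTheory ProbabilityTheory Filter Topology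
open scoped ENNReal NNReal

namespace ProbabilityTheory

variable {Ω : Type*} {mΩ : MeasurableSpace Ω} {P : Measure Ω}

lemma IndepFun.hasLaw_sub_gaussianReal {X Y : Ω → ℝ} {m₁ m₂ : ℝ} {v₁ v₂ : ℝ≥0}
    (hXY : IndepFun X Y P) (hX : HasLaw X (gaussianReal m₁ v₁) P)
    (hY : HasLaw Y (gaussianReal m₂ v₂) P) :
    HasLaw (X - Y) (gaussianReal (m₁ - m₂) (v₁ + v₂)) P := by
  have h := (hXY.comp measurable_id measurable_neg).hasLaw_add hX (gaussianReal_neg hY)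
  rwa [gaussianReal_conv_gaussianReal, ← sub_eq_add_neg] at h

variable {W : Ω → ℝ} {v : ℝ≥0}

lemma HasLaw.memLp_sq_gaussianReal (hW : HasLaw W (gaussianReal 0 v) P) :
    MemLp (fun ω ↦ W ω ^ 2) 2 P := by
  have h : MemLp (fun x : ℝ ↦ x ^ 2) 2 (gaussianReal 0 v) := by
    rw [memLp_two_iff_integrable_sq (by fun_prop)]
    simpa [← pow_mul, Even.pow_abs ⟨2, rfl⟩] using
      (memLp_id_gaussianReal (μ := 0) (v := v) 4).integrable_norm_pow (by simp)
  rw [← hW.map_eq] at h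
  exact h.comp_of_map hW.aemeasurable

lemma HasLaw.integral_sq_gaussianReal (hW : HasLaw W (gaussianReal 0 v) P) :
    P[fun ω ↦ W ω ^ 2] = (v : ℝ) := by
  have h := variance_eq_sub (memLp_id_gaussianReal' (μ := 0) (v := v) 2 (by simp))
  rw [variance_id_gaussianReal] at h
  rw [← Function.comp_def (fun x : ℝ ↦ x ^ 2), hW.integral_comp (by fun_prop), h]
  simp [integral_id_gaussianReal]

lemma HasLaw.variance_sq_gaussianReal (hW : HasLaw W (gaussianReal 0 v) P) :
    Var[fun ω ↦ W ω ^ 2; P] = Var[fun x ↦ x ^ 2; gaussianReal 0 v] := by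
  rw [← hW.map_eq, variance_map (by fun_prop) hW.aemeasurable, Function.comp_def]

end ProbabilityTheory

lemma sq_abs_sub_le_abs_sq_sub {t s : ℝ} (ht : 0 ≤ t) (hs : 0 ≤ s) :
    |t - s| ^ 2 ≤ |t ^ 2 - s ^ 2| := by
  rw [show t ^ 2 - s ^ 2 = (t - s) * (t + s) by ring, abs_mul, abs_of_nonneg (add_nonneg ht hs), sq]
  gcongr
  exact abs_sub_le_iff.2 ⟨by linarith, by linarith⟩

lemma abs_norm_add_div_sub_lt {E : Type*} [SeminormedAddCommGroup E] {a w : E} {r s c : ℝ}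
    (hr : 0 < r) (hs : 0 ≤ s) (ha : ‖a‖ / r < c / 2)
    (hw : |(‖w‖ / r) ^ 2 - s ^ 2| < (c / 2) ^ 2) : |‖a + w‖ / r - s| < c := by
  have hc : 0 < c / 2 := (div_nonneg (norm_nonneg a) hr.le).trans_lt ha
  have hsignal : |‖a + w‖ / r - ‖w‖ / r| ≤ ‖a‖ / r := by
    rw [← sub_div, abs_div, abs_of_pos hr]
    gcongr
    simpa using abs_norm_sub_norm_le (a + w) w
  have hnoise : |‖w‖ / r - s| < c / 2 :=
    lt_of_pow_lt_pow_left₀ 2 hc.le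
      ((sq_abs_sub_le_abs_sq_sub (by positivity) hs).trans_lt hw)
  calc |‖a + w‖ / r - s| ≤ |‖a + w‖ / r - ‖w‖ / r| + |‖w‖ / r - s| := abs_sub_le _ _ _
    _ < c / 2 + c / 2 := add_lt_add_of_le_of_lt (hsignal.trans ha.le) hnoise
    _ = c := add_halves c

lemma Finite.ciInf_mem_of_forall_mem {α ι : Type*} [ConditionallyCompleteLinearOrder α] [Finite ι]
    [Nonempty ι] {f : ι → α} {S : Set α} (h : ∀ i, f i ∈ S) : ⨅ i, f i ∈ S := by
  obtain ⟨i, hi⟩ := exists_eq_ciInf_of_finite (f := f)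
  exact hi ▸ h i

lemma Finite.ciSup_mem_of_forall_mem {α ι : Type*} [ConditionallyCompleteLinearOrder α] [Finite ι]
    [Nonempty ι] {f : ι → α} {S : Set α} (h : ∀ i, f i ∈ S) : ⨆ i, f i ∈ S := by
  obtain ⟨i, hi⟩ := exists_eq_ciSup_of_finite (f := f)
  exact hi ▸ h i

lemma tendsto_norm_sub_div_sqrt_of_isometry {X : Type*} [PseudoMetricSpace X] {d' : ℕ}
    {ι : (d : ℕ) → X → EuclideanSpace ℝ (Fin d)} (hι : ∀ d, d' ≤ d → Isometry (ι d)) (a b : X) :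
    Tendsto (fun d : ℕ ↦ ‖ι d a - ι d b‖ / √d) atTop (𝓝 0) := by
  refine ((tendsto_const_nhds (x := dist a b)).div_atTop
    (Real.tendsto_sqrt_atTop.comp tendsto_natCast_atTop_atTop)).congr' ?_
  filter_upwards [eventually_ge_atTop d'] with d hd
  rw [Function.comp_apply, ← (hι d hd).dist_eq a b, dist_eq_norm]

section

variable {Ω : Type*} {mΩ : MeasurableSpace Ω} {μ : Measure Ω} [IsProbabilityMeasure μ]

lemma tendsto_measure_of_tendsto_measure_iUnion_compl {α ι : Type*} [Fintype ι] {l : Filter α}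
    {A : α → ι → Set Ω} {B : α → Set Ω} (hA : ∀ i, Tendsto (fun a ↦ μ (A a i)) l (𝓝 0))
    (hB : ∀ a, (⋃ i, A a i)ᶜ ⊆ B a) : Tendsto (fun a ↦ μ (B a)) l (𝓝 1) := by
  have hunion : Tendsto (fun a ↦ μ (⋃ i, A a i)) l (𝓝 0) :=
    tendsto_of_tendsto_of_tendsto_of_le_of_le tendsto_const_nhds
      (by simpa using tendsto_finsetSum Finset.univ fun i _ ↦ hA i)
      (fun _ ↦ zero_le) (fun _ ↦ measure_iUnion_fintype_le _ _)
  refine tendsto_of_tendsto_of_tendsto_of_le_of_le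
    (by simpa using ENNReal.Tendsto.sub tendsto_const_nhds hunion (.inl ENNReal.one_ne_top))
    tendsto_const_nhds (fun a ↦ ?_) (fun _ ↦ prob_le_one)
  rw [tsub_le_iff_left, ← measure_univ (μ := μ)]
  exact (measure_univ_le_add_compl _).trans (by gcongr; exact hB a)

lemma tendsto_measure_abs_sum_div_sub_ge {Z : (d : ℕ) → Fin d → Ω → ℝ} {m V δ : ℝ}
    (hZ : ∀ d k, MemLp (Z d k) 2 μ) (hindep : ∀ d, Pairwise fun k l ↦ IndepFun (Z d k) (Z d l) μ)
    (hmean : ∀ d k, μ[Z d k] = m) (hvar : ∀ d k, Var[Z d k; μ] ≤ V) (hδ : 0 < δ) :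
    Tendsto (fun d : ℕ ↦ μ {ω | δ ≤ |(∑ k, Z d k ω) / d - m|}) atTop (𝓝 0) := by
  have hbound : ∀ d : ℕ, 0 < d →
      μ {ω | δ ≤ |(∑ k, Z d k ω) / d - m|} ≤ ENNReal.ofReal (V / δ ^ 2 / d) := by
    intro d hd
    have hd : (0 : ℝ) < d := Nat.cast_pos.mpr hd
    have hmeanS : μ[∑ k, Z d k] = d * m := by
      simp [integral_finsetSum _ fun k _ ↦ (hZ d k).integrable one_le_two, hmean]
    have hvarS : Var[∑ k, Z d k; μ] ≤ d * V := by
      rw [IndepFun.variance_sum (fun k _ ↦ hZ d k) fun k _ l _ hkl ↦ hindep d hkl]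
      simpa using Finset.sum_le_card_nsmul Finset.univ _ _ fun k _ ↦ hvar d k
    have hset : {ω | δ ≤ |(∑ k, Z d k ω) / d - m|}
        = {ω | δ * d ≤ |(∑ k, Z d k) ω - μ[∑ k, Z d k]|} := by
      ext ω
      rw [Set.mem_ofPred_eq, Set.mem_ofPred_eq, hmeanS, Finset.sum_apply,
        show (∑ k, Z d k ω) / d - m = ((∑ k, Z d k ω) - d * m) / d by field_simp,
        abs_div, abs_of_pos hd, le_div_iff₀ hd]
    rw [hset]
    refine (meas_ge_le_variance_div_sq (memLp_finsetSum' _ fun k _ ↦ hZ d k)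
      (by positivity)).trans (ENNReal.ofReal_le_ofReal ?_)
    calc Var[∑ k, Z d k; μ] / (δ * d) ^ 2 ≤ d * V / (δ * d) ^ 2 := by gcongr
      _ = V / δ ^ 2 / d := by field_simp
  refine tendsto_of_tendsto_of_tendsto_of_le_of_le' tendsto_const_nhds
    (by simpa using ENNReal.tendsto_ofReal (tendsto_const_div_atTop_nhds_zero_nat (V / δ ^ 2)))
    (.of_forall fun _ ↦ zero_le) ?_
  filter_upwards [eventually_gt_atTop 0] with d hd using hbound d hd

lemma tendsto_measure_noisy_norm_deviation {n : ℕ} {σ c : ℝ} (hσ : 0 ≤ σ) (hc : 0 < c)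
    {u : (d : ℕ) → EuclideanSpace ℝ (Fin d)} (hu : Tendsto (fun d : ℕ ↦ ‖u d‖ / √d) atTop (𝓝 0))
    {ε : (d : ℕ) → Fin n → Ω → EuclideanSpace ℝ (Fin d)}
    (hmeas : ∀ d i (k : Fin d), Measurable (fun ω ↦ ε d i ω k))
    (hdist : ∀ d i (k : Fin d),
      μ.map (fun ω ↦ ε d i ω k) = gaussianReal 0 ⟨σ ^ 2, sq_nonneg σ⟩)
    (hindep : ∀ d : ℕ, iIndepFun (fun (p : Fin n × Fin d) ω ↦ ε d p.1 ω p.2) μ)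
    {i j : Fin n} (hij : i ≠ j) :
    Tendsto (fun d : ℕ ↦ μ {ω | c ≤ |‖u d + (ε d i ω - ε d j ω)‖ / √d - √2 * σ|})
      atTop (𝓝 0) := by
  set v : ℝ≥0 := ⟨σ ^ 2, sq_nonneg σ⟩
  have hlaw : ∀ d (k : Fin d),
      HasLaw (fun ω ↦ ε d i ω k - ε d j ω k) (gaussianReal 0 (v + v)) μ := fun d k ↦ by
    have h := ((hindep d).indepFun (i := (i, k)) (j := (j, k))
      (by simp [hij])).hasLaw_sub_gaussianReal
      ⟨(hmeas d i k).aemeasurable, hdist d i k⟩ ⟨(hmeas d j k).aemeasurable, hdist d j k⟩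
    rwa [sub_zero] at h
  have hrow : ∀ d, Pairwise fun k l : Fin d ↦
      IndepFun (fun ω ↦ (ε d i ω k - ε d j ω k) ^ 2) (fun ω ↦ (ε d i ω l - ε d j ω l) ^ 2) μ := by
    intro d k l hkl
    have h := (hindep d).indepFun_prodMk_prodMk (fun p ↦ hmeas d p.1 p.2)
      (i, k) (j, k) (i, l) (j, l) (by simp [hkl]) (by simp [hkl]) (by simp [hkl]) (by simp [hkl])
    exact h.comp ((measurable_fst.sub measurable_snd).pow_const 2)
      ((measurable_fst.sub measurable_snd).pow_const 2)
  have hwlln := tendsto_measure_abs_sum_div_sub_ge (fun d k ↦ (hlaw d k).memLp_sq_gaussianReal) hrow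
    (fun d k ↦ (hlaw d k).integral_sq_gaussianReal)
    (fun d k ↦ (hlaw d k).variance_sq_gaussianReal.le) (pow_pos (half_pos hc) 2)
  refine tendsto_of_tendsto_of_tendsto_of_le_of_le' tendsto_const_nhds hwlln
    (.of_forall fun _ ↦ zero_le) ?_
  filter_upwards [hu.eventually (gt_mem_nhds (half_pos hc)), eventually_gt_atTop 0] with d hud hd
  refine measure_mono fun ω ↦ ?_
  simp only [Set.mem_ofPred_eq]
  contrapose!
  intro hω
  have hnorm : (‖ε d i ω - ε d j ω‖ / √d) ^ 2 = (∑ k, (ε d i ω k - ε d j ω k) ^ 2) / d := by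
    rw [div_pow, EuclideanSpace.norm_sq_eq, Real.sq_sqrt (Nat.cast_nonneg d)]
    simp [Real.norm_eq_abs, sq_abs]
  have hs : (√2 * σ) ^ 2 = ((v + v : ℝ≥0) : ℝ) := by
    rw [mul_pow, Real.sq_sqrt zero_le_two, NNReal.coe_add]
    change 2 * σ ^ 2 = σ ^ 2 + σ ^ 2
    ring
  refine abs_norm_add_div_sub_lt (Real.sqrt_pos.2 (Nat.cast_pos.2 hd)) (by positivity) hud ?_
  rwa [hnorm, hs]

end

theorem min_max_noisy_distance_concentration_general
    (Ω : Type*) [MeasureSpace Ω] [IsProbabilityMeasure (ℙ : Measure Ω)]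
    (n d' : ℕ) (hn : 2 ≤ n) (x : Fin n → EuclideanSpace ℝ (Fin d'))
    (σ : ℝ) (hσ : 0 < σ)
    (ι : (d : ℕ) → EuclideanSpace ℝ (Fin d') → EuclideanSpace ℝ (Fin d))
    (hι : ∀ d, d' ≤ d → Isometry (ι d))
    (ε : (d : ℕ) → Fin n → Ω → EuclideanSpace ℝ (Fin d))
    (hmeas : ∀ d i (k : Fin d), Measurable (fun ω => ε d i ω k))
    (hdist : ∀ d i (k : Fin d),
      Measure.map (fun ω => ε d i ω k) ℙ = gaussianReal 0 ⟨σ ^ 2, sq_nonneg σ⟩)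
    (hindep : ∀ d : ℕ, iIndepFun
      (fun (p : Fin n × Fin d) ω => ε d p.1 ω p.2) ℙ)
    (Δ : (d : ℕ) → Fin n → Fin n → Ω → ℝ)
    (hΔ : ∀ d i j ω, Δ d i j ω = ‖ι d (x i) + ε d i ω - (ι d (x j) + ε d j ω)‖) :
    ∀ c : ℝ, 0 < c →
      (Tendsto (fun d : ℕ => ℙ {ω : Ω |
          Real.sqrt 2 * σ - c <
            ⨅ p : {p : Fin n × Fin n // p.1 ≠ p.2}, Δ d p.1.1 p.1.2 ω / Real.sqrt d})
        atTop (nhds 1)) ∧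
      (Tendsto (fun d : ℕ => ℙ {ω : Ω |
          (⨅ p : {p : Fin n × Fin n // p.1 ≠ p.2}, Δ d p.1.1 p.1.2 ω / Real.sqrt d) <
            Real.sqrt 2 * σ + c})
        atTop (nhds 1)) ∧
      (Tendsto (fun d : ℕ => ℙ {ω : Ω |
          Real.sqrt 2 * σ - c <
            ⨆ p : {p : Fin n × Fin n // p.1 ≠ p.2}, Δ d p.1.1 p.1.2 ω / Real.sqrt d})
        atTop (nhds 1)) ∧
      (Tendsto (fun d : ℕ => ℙ {ω : Ω |
          (⨆ p : {p : Fin n × Fin n // p.1 ≠ p.2}, Δ d p.1.1 p.1.2 ω / Real.sqrt d) <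
            Real.sqrt 2 * σ + c})
        atTop (nhds 1)) := by
  intro c hc
  have hpair : ∀ p : {p : Fin n × Fin n // p.1 ≠ p.2}, Tendsto
      (fun d : ℕ ↦ ℙ {ω | c ≤ |Δ d p.1.1 p.1.2 ω / √d - √2 * σ|}) atTop (𝓝 0) := by
    rintro ⟨⟨i, j⟩, hij⟩
    simpa only [hΔ, add_sub_add_comm] using tendsto_measure_noisy_norm_deviation hσ.le hc
      (tendsto_norm_sub_div_sqrt_of_isometry hι (x i) (x j)) hmeas hdist hindep hij
  have : Nonempty {p : Fin n × Fin n // p.1 ≠ p.2} :=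
    ⟨⟨(⟨0, by omega⟩, ⟨1, by omega⟩), by simp [Fin.ext_iff]⟩⟩
  have hgood : ∀ d ω, ω ∈ (⋃ p : {p : Fin n × Fin n // p.1 ≠ p.2},
      {ω | c ≤ |Δ d p.1.1 p.1.2 ω / √d - √2 * σ|})ᶜ →
      ∀ p : {p : Fin n × Fin n // p.1 ≠ p.2},
        Δ d p.1.1 p.1.2 ω / √d ∈ Set.Ioo (√2 * σ - c) (√2 * σ + c) := by
    intro d ω hω p
    simp only [Set.compl_iUnion, Set.mem_iInter, Set.mem_compl_iff, Set.mem_ofPred_eq,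
      not_le] at hω
    obtain ⟨hlo, hhi⟩ := abs_sub_lt_iff.mp (hω p)
    constructor <;> linarith
  refine ⟨?_, ?_, ?_, ?_⟩ <;>
    refine tendsto_measure_of_tendsto_measure_iUnion_compl hpair fun d ω hω ↦ ?_
  · exact (Finite.ciInf_mem_of_forall_mem (hgood d ω hω)).1
  · exact (Finite.ciInf_mem_of_forall_mem (hgood d ω hω)).2
  · exact (Finite.ciSup_mem_of_forall_mem (hgood d ω hω)).1
  · exact (Finite.ciSup_mem_of_forall_mem (hgood d ω hω)).2

/-- In the setting of pairwise distinct points with isometric embeddings and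
independent Gaussian noise `N(0, σ²I_d)`, for every `c > 0` all four probabilities
`P(min_{i≠j} Δ_{i,j,d}/√d > √2σ − c)`, `P(min_{i≠j} Δ_{i,j,d}/√d < √2σ + c)`,
`P(max_{i≠j} Δ_{i,j,d}/√d > √2σ − c)`, `P(max_{i≠j} Δ_{i,j,d}/√d < √2σ + c)` tend to `1`. -/
theorem min_max_noisy_distance_concentration
    (Ω : Type*) [MeasureSpace Ω] [IsProbabilityMeasure (ℙ : Measure Ω)]
    (n d' : ℕ) (hn : 2 ≤ n) (x : Fin n → EuclideanSpace ℝ (Fin d'))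
    (hx : Function.Injective x)
    (σ : ℝ) (hσ : 0 < σ)
    (ι : (d : ℕ) → EuclideanSpace ℝ (Fin d') → EuclideanSpace ℝ (Fin d))
    (hι : ∀ d, d' ≤ d → Isometry (ι d))
    (ε : (d : ℕ) → Fin n → Ω → EuclideanSpace ℝ (Fin d))
    (hmeas : ∀ d i (k : Fin d), Measurable (fun ω => ε d i ω k))
    (hdist : ∀ d i (k : Fin d),
      Measure.map (fun ω => ε d i ω k) ℙ = gaussianReal 0 ⟨σ ^ 2, sq_nonneg σ⟩)
    (hindep : ∀ d : ℕ, iIndepFun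
      (fun (p : Fin n × Fin d) ω => ε d p.1 ω p.2) ℙ)
    (Δ : (d : ℕ) → Fin n → Fin n → Ω → ℝ)
    (hΔ : ∀ d i j ω, Δ d i j ω = ‖ι d (x i) + ε d i ω - (ι d (x j) + ε d j ω)‖) :
    ∀ c : ℝ, 0 < c →
      (Tendsto (fun d : ℕ => ℙ {ω : Ω |
          Real.sqrt 2 * σ - c <
            ⨅ p : {p : Fin n × Fin n // p.1 ≠ p.2}, Δ d p.1.1 p.1.2 ω / Real.sqrt d})
        atTop (nhds 1)) ∧
      (Tendsto (fun d : ℕ => ℙ {ω : Ω |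
          (⨅ p : {p : Fin n × Fin n // p.1 ≠ p.2}, Δ d p.1.1 p.1.2 ω / Real.sqrt d) <
            Real.sqrt 2 * σ + c})
        atTop (nhds 1)) ∧
      (Tendsto (fun d : ℕ => ℙ {ω : Ω |
          Real.sqrt 2 * σ - c <
            ⨆ p : {p : Fin n × Fin n // p.1 ≠ p.2}, Δ d p.1.1 p.1.2 ω / Real.sqrt d})
        atTop (nhds 1)) ∧
      (Tendsto (fun d : ℕ => ℙ {ω : Ω |
          (⨆ p : {p : Fin n × Fin n // p.1 ≠ p.2}, Δ d p.1.1 p.1.2 ω / Real.sqrt d) <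
            Real.sqrt 2 * σ + c})
        atTop (nhds 1)) :=
  min_max_noisy_distance_concentration_general Ω n d' hn x σ hσ ι hι ε hmeas hdist hindep Δ hΔ
end

section
/- Fix a positive integer m and let D be a persistence diagram with fewer than m points (counted with multiplicity). Then the hole detection score s_m is discontinuous at D with respect to the bottleneck distance: s_m(D) = 0, and for every δ > 0 there exists a persistence diagram D' with d_B(D, D') < δ and s_m(D') = 1. -/
/-!
Padding `D` with `m - |D|` copies of the point `(0, δ)` gives a diagram `D'` with exactly `m`
points, all of positive persistence. Then `p_m(D') > 0` while `p_{m+1}(D') = 0`, so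
`s_m(D') = 1`; and matching every point of `D` to itself while leaving the new points unmatched
costs `δ / 2`, so `d_B(D, D') ≤ δ / 2 < δ`. On the other hand `p_m(D) = 0`, so `s_m(D) = 0`.
-/

/-- A persistence diagram: a finite multiset of points `(b, e) ∈ ℝ²` with `b < e`. -/
def IsPersistenceDiagram (D : Multiset (ℝ × ℝ)) : Prop :=
  ∀ x ∈ D, x.1 < x.2

/-- Cost of a partial matching `M` (a multiset of matched pairs whose first and second
projections are sub-multisets of `D` and `D'` respectively): the maximum of the `ℓ∞` distances
over matched pairs and of half the persistences over unmatched points (`0` for the empty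
matching of two empty diagrams). -/
noncomputable def matchingCost (D D' : Multiset (ℝ × ℝ))
    (M : Multiset ((ℝ × ℝ) × (ℝ × ℝ))) : ℝ :=
  ((M.map fun q : (ℝ × ℝ) × (ℝ × ℝ) => max |q.1.1 - q.2.1| |q.1.2 - q.2.2|) +
    ((D - M.map Prod.fst) + (D' - M.map Prod.snd)).map
      fun x : ℝ × ℝ => (x.2 - x.1) / 2).fold max 0

/-- The bottleneck distance between persistence diagrams: the infimum of the costs over all
partial matchings. -/
noncomputable def bottleneckDist (D D' : Multiset (ℝ × ℝ)) : ℝ :=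
  sInf {c : ℝ | ∃ M : Multiset ((ℝ × ℝ) × (ℝ × ℝ)),
    M.map Prod.fst ≤ D ∧ M.map Prod.snd ≤ D' ∧ c = matchingCost D D' M}

/-- `persistenceRank m D`: the `m`-th largest persistence among the points of `D` counted with
multiplicity, defined to be `0` if `D` has fewer than `m` points. -/
noncomputable def persistenceRank (m : ℕ) (D : Multiset (ℝ × ℝ)) : ℝ :=
  let l := (D.map fun x => x.2 - x.1).sort (· ≤ ·)
  if m ≤ l.length then l.getD (l.length - m) 0 else 0

/-- The hole detection score `s_m`. -/
noncomputable def holeDetectionScore (m : ℕ) (D : Multiset (ℝ × ℝ)) : ℝ :=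
  if 0 < persistenceRank m D then
    (persistenceRank m D - persistenceRank (m + 1) D) / persistenceRank m D
  else 0

namespace Multiset

theorem fold_max_le_iff {α : Type*} [LinearOrder α] {s : Multiset α} {b c : α} :
    s.fold max b ≤ c ↔ b ≤ c ∧ ∀ x ∈ s, x ≤ c := by
  induction s using Multiset.induction_on with
  | empty => simp
  | cons a s ih => simp [fold_cons_left, ih]; tauto

theorem le_fold_max {α : Type*} [LinearOrder α] (s : Multiset α) (b : α) : b ≤ s.fold max b :=
  (fold_max_le_iff.mp le_rfl).1

end Multiset

theorem IsPersistenceDiagram.add {D E : Multiset (ℝ × ℝ)} (hD : IsPersistenceDiagram D)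
    (hE : IsPersistenceDiagram E) : IsPersistenceDiagram (D + E) := by
  intro x hx
  rcases Multiset.mem_add.mp hx with hx | hx
  exacts [hD x hx, hE x hx]

theorem isPersistenceDiagram_replicate {b e : ℝ} (h : b < e) (n : ℕ) :
    IsPersistenceDiagram (Multiset.replicate n (b, e)) := by
  intro x hx
  rw [Multiset.eq_of_mem_replicate hx]
  exact h

theorem matchingCost_nonneg (D D' : Multiset (ℝ × ℝ)) (M : Multiset ((ℝ × ℝ) × (ℝ × ℝ))) :
    0 ≤ matchingCost D D' M :=
  Multiset.le_fold_max _ _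

theorem bottleneckDist_le_matchingCost {D D' : Multiset (ℝ × ℝ)}
    {M : Multiset ((ℝ × ℝ) × (ℝ × ℝ))} (h₁ : M.map Prod.fst ≤ D) (h₂ : M.map Prod.snd ≤ D') :
    bottleneckDist D D' ≤ matchingCost D D' M :=
  csInf_le ⟨0, by rintro _ ⟨N, -, -, rfl⟩; exact matchingCost_nonneg D D' N⟩ ⟨M, h₁, h₂, rfl⟩

theorem bottleneckDist_add_le {D E : Multiset (ℝ × ℝ)} {c : ℝ} (hc : 0 ≤ c)
    (hE : ∀ x ∈ E, x.2 - x.1 ≤ 2 * c) : bottleneckDist D (D + E) ≤ c := by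
  set M := D.map fun x => (x, x)
  have hfst : M.map Prod.fst = D := by simp [M, Multiset.map_map]
  have hsnd : M.map Prod.snd = D := by simp [M, Multiset.map_map]
  refine (bottleneckDist_le_matchingCost hfst.le
    (hsnd.le.trans (Multiset.le_add_right _ _))).trans ?_
  rw [matchingCost, hfst, hsnd, tsub_self, add_tsub_cancel_left, zero_add,
    Multiset.fold_max_le_iff]
  refine ⟨hc, fun y hy => ?_⟩
  simp only [M, Multiset.map_map, Multiset.mem_add, Multiset.mem_map] at hy
  rcases hy with ⟨x, -, rfl⟩ | ⟨x, hx, rfl⟩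
  · simpa using hc
  · linarith [hE x hx]

theorem persistenceRank_eq_zero_of_card_lt {m : ℕ} {D : Multiset (ℝ × ℝ)}
    (h : Multiset.card D < m) : persistenceRank m D = 0 := by
  rw [persistenceRank, if_neg (by simpa [Multiset.length_sort] using h)]

theorem persistenceRank_mem {m : ℕ} {D : Multiset (ℝ × ℝ)} (hm : 0 < m)
    (h : m ≤ Multiset.card D) : persistenceRank m D ∈ D.map fun x => x.2 - x.1 := by
  set l := (D.map fun x => x.2 - x.1).sort (· ≤ ·)
  have hl : l.length = Multiset.card D := by simp [l, Multiset.length_sort]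
  have hl_pos : 0 < l.length := by omega
  rw [persistenceRank, if_pos (hl ▸ h), List.getD_eq_getElem _ _ (Nat.sub_lt hl_pos hm),
    ← Multiset.mem_sort (· ≤ ·)]
  exact List.getElem_mem _

theorem persistenceRank_pos {m : ℕ} {D : Multiset (ℝ × ℝ)} (hD : IsPersistenceDiagram D)
    (hm : 0 < m) (h : m ≤ Multiset.card D) : 0 < persistenceRank m D := by
  obtain ⟨x, hx, hrank⟩ := Multiset.mem_map.mp (persistenceRank_mem hm h)
  rw [← hrank]
  exact sub_pos.mpr (hD x hx)

theorem holeDetectionScore_eq_zero_of_card_lt {m : ℕ} {D : Multiset (ℝ × ℝ)}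
    (h : Multiset.card D < m) : holeDetectionScore m D = 0 := by
  simp [holeDetectionScore, persistenceRank_eq_zero_of_card_lt h]

theorem holeDetectionScore_card_eq_one {D : Multiset (ℝ × ℝ)} (hD : IsPersistenceDiagram D)
    (h : 0 < Multiset.card D) : holeDetectionScore (Multiset.card D) D = 1 := by
  have hpos := persistenceRank_pos hD h le_rfl
  rw [holeDetectionScore, if_pos hpos,
    persistenceRank_eq_zero_of_card_lt (Nat.lt_succ_self _), sub_zero, div_self hpos.ne']

theorem holeDetectionScore_discontinuous_general (m : ℕ)
    (D : Multiset (ℝ × ℝ)) (hD : IsPersistenceDiagram D) (hcard : Multiset.card D < m) :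
    holeDetectionScore m D = 0 ∧
      ∀ δ : ℝ, 0 < δ → ∃ D' : Multiset (ℝ × ℝ), IsPersistenceDiagram D' ∧
        bottleneckDist D D' < δ ∧ holeDetectionScore m D' = 1 := by
  refine ⟨holeDetectionScore_eq_zero_of_card_lt hcard, fun δ hδ => ?_⟩
  set E := Multiset.replicate (m - Multiset.card D) ((0 : ℝ), δ)
  have hD' : IsPersistenceDiagram (D + E) := hD.add (isPersistenceDiagram_replicate hδ _)
  have hcard' : Multiset.card (D + E) = m := by simp [E]; omega
  refine ⟨D + E, hD', ?_, ?_⟩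
  · have hE : ∀ x ∈ E, x.2 - x.1 ≤ 2 * (δ / 2) := by
      intro x hx
      rw [Multiset.eq_of_mem_replicate hx]
      linarith
    linarith [bottleneckDist_add_le (D := D) (by positivity) hE]
  · simpa [hcard'] using holeDetectionScore_card_eq_one hD' (by omega)

/-- For a positive integer `m` and a persistence diagram `D` with fewer than
`m` points (counted with multiplicity), the hole detection score `s_m` is discontinuous at `D`:
`s_m(D) = 0`, yet arbitrarily close (in bottleneck distance) diagrams `D'` have `s_m(D') = 1`. -/
theorem holeDetectionScore_discontinuous (m : ℕ) (hm : 1 ≤ m)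
    (D : Multiset (ℝ × ℝ)) (hD : IsPersistenceDiagram D) (hcard : Multiset.card D < m) :
    holeDetectionScore m D = 0 ∧
      ∀ δ : ℝ, 0 < δ → ∃ D' : Multiset (ℝ × ℝ), IsPersistenceDiagram D' ∧
        bottleneckDist D D' < δ ∧ holeDetectionScore m D' = 1 :=
  holeDetectionScore_discontinuous_general m D hD hcard
end
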